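/- arXiv:math/0504076 — 3 statements merged into one kernel-verified Lean document; each statement's English description precedes it below -/
import Mathlib

section
/- Local a priori sup-norm estimate for the semilinear hyperbolic mixed problem: Suppose Λ, F, H, A are continuous, the hyperbolicity condition holds, and the Lipschitz hypotheses hold with constants L_F, L_H ≥ 0. Set q₀ = n·L_F·(1 + n·L_H). Let t₀ > 0 satisfy q₀·t₀ < 1 and t₀ · max_{1≤i≤n} sup_{[0,l]×[0,t₀]} |Λ_i| < l. Then every continuously differentiable solution U of the mixed problem on [0,l]×[0,t₀] satisfies max_{1≤i≤n} sup_{[0,l]×[0,t₀]} |U_i(x,t)| ≤ (1/(1 − q₀t₀)) · [ ( max_{1≤i≤n} sup_{x∈[0,l]} |A_i(x)| + t₀ · max_{1≤i≤n} sup_{(x,t)∈[0,l]×[0,t₀]} |F_i(x,t,0)| ) · (1 + n·L_H) + max_{1≤i≤n} sup_{t∈[0,t₀]} |H_i(t,0)| ]. -/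
/-!
Each component `u = U_i` solves a scalar transport equation `u_t + λ u_x = g`, and `|u|` can
grow at most at rate `sup |g|` along characteristics. This is a maximum principle on trapezoids
`{a t ≤ x ≤ l - b t}`: at the first time `u` touches a barrier `B + C t` with `C > g`, the backward
characteristic direction `(-λ, -1)` points into the earlier part of the trapezoid (unless it leaves
through a side, which the hypotheses exclude), so Fermat's theorem along it gives `g ≥ C`.

On the trapezoid of side slope `max |Λ|` ending at the boundary where a component is outgoing,
no characteristic enters through a side; hence the traces `V(t)` are bounded by
`sup |A| + t₀ C`, then the boundary values `H(t, V(t))` through `L_H`, and finally `U` on the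
whole rectangle. With `C = sup |F(·,·,0)| + n L_F M` the estimate closes on `M = sup |U|`:
`M ≤ (sup |A| + t₀ sup |F(·,·,0)|)(1 + n L_H) + sup |H(·,0)| + q₀ t₀ M`.
-/

open Set

noncomputable section

/-- The rectangle `Π^T = [0,l] × [0,T]` as a subset of `ℝ × ℝ` (first coordinate `x`,
second coordinate `t`). -/
def MixedRect (l T : ℝ) : Set (ℝ × ℝ) := Set.Icc 0 l ×ˢ Set.Icc 0 T

/-- The boundary trace `V(t) = (U_1(0,t),…,U_k(0,t),U_{k+1}(l,t),…,U_n(l,t))`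
(with 0-based indices: components `i < k` are taken at `x = 0`, components `i ≥ k`
at `x = l`). -/
def bTrace (n k : ℕ) (l : ℝ) (U : ℝ × ℝ → Fin n → ℝ) (t : ℝ) : Fin n → ℝ :=
  fun i => if (i : ℕ) < k then U (0, t) i else U (l, t) i

/-- `U` solves the mixed problem (i)–(iii) on `[0,l] × [0,T]`:
(i) `∂_t U_i + Λ_i ∂_x U_i = F_i(x,t,U)` on the rectangle,
(ii) `U(x,0) = A(x)`,
(iii) `U_i(0,t) = H_i(t,V(t))` for `i ≥ k` and `U_i(l,t) = H_i(t,V(t))` for `i < k`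
(0-based indices). -/
def IsMixedSolution (n k : ℕ) (l T : ℝ)
    (Λ : ℝ × ℝ → Fin n → ℝ) (F : ℝ × ℝ → (Fin n → ℝ) → Fin n → ℝ)
    (A : ℝ → Fin n → ℝ) (H : ℝ → (Fin n → ℝ) → Fin n → ℝ)
    (U : ℝ × ℝ → Fin n → ℝ) : Prop :=
  (∀ p ∈ MixedRect l T, ∀ i : Fin n,
      fderivWithin ℝ (fun q => U q i) (MixedRect l T) p (0, 1)
        + Λ p i * fderivWithin ℝ (fun q => U q i) (MixedRect l T) p (1, 0)
        = F p (U p) i) ∧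
  (∀ x ∈ Set.Icc (0 : ℝ) l, ∀ i : Fin n, U (x, 0) i = A x i) ∧
  (∀ t ∈ Set.Icc (0 : ℝ) T, ∀ i : Fin n,
      (k ≤ (i : ℕ) → U (0, t) i = H t (bTrace n k l U t) i) ∧
      ((i : ℕ) < k → U (l, t) i = H t (bTrace n k l U t) i))

/-- Hyperbolicity: `Λ_i < 0` for the first `k` components and `Λ_i > 0` for the
remaining ones, on the set `S` (0-based indices). -/
def HyperbolicOn (n k : ℕ) (Λ : ℝ × ℝ → Fin n → ℝ) (S : Set (ℝ × ℝ)) : Prop :=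
  ∀ p ∈ S, ∀ i : Fin n, ((i : ℕ) < k → Λ p i < 0) ∧ (k ≤ (i : ℕ) → 0 < Λ p i)

/-- The Lipschitz hypothesis for `F` with constant `LF` on the set `S`. -/
def LipschitzFOn (n : ℕ) (F : ℝ × ℝ → (Fin n → ℝ) → Fin n → ℝ)
    (S : Set (ℝ × ℝ)) (LF : ℝ) : Prop :=
  ∀ p ∈ S, ∀ i : Fin n, ∀ y₁ y₂ : Fin n → ℝ,
    |F p y₁ i - F p y₂ i| ≤ LF * ∑ j, |y₁ j - y₂ j|

/-- The Lipschitz hypothesis for `H` with constant `LH` on `[0,T]`. -/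
def LipschitzHOn (n : ℕ) (H : ℝ → (Fin n → ℝ) → Fin n → ℝ) (T : ℝ) (LH : ℝ) : Prop :=
  ∀ t ∈ Set.Icc (0 : ℝ) T, ∀ i : Fin n, ∀ z₁ z₂ : Fin n → ℝ,
    |H t z₁ i - H t z₂ i| ≤ LH * ∑ j, |z₁ j - z₂ j|

/-- Compatibility hypotheses: `A` vanishes outside a compact subset of `(0,l)`, and
`t ↦ H(t,0)` vanishes on a neighborhood of `t = 0`. -/
def CompatData (n : ℕ) (l : ℝ) (A : ℝ → Fin n → ℝ)
    (H : ℝ → (Fin n → ℝ) → Fin n → ℝ) : Prop :=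
  (∃ K : Set ℝ, IsCompact K ∧ K ⊆ Set.Ioo 0 l ∧ ∀ x ∉ K, A x = 0) ∧
  (∃ δ > (0 : ℝ), ∀ t ∈ Set.Ico (0 : ℝ) δ, H t 0 = 0)

open Filter Topology

def trapezoid (l T a b : ℝ) : Set (ℝ × ℝ) :=
  {p | p.1 ∈ Icc (a * p.2) (l - b * p.2) ∧ p.2 ∈ Icc 0 T}

section Trapezoid

variable {l T a b : ℝ}

theorem trapezoid_zero_zero : trapezoid l T 0 0 = MixedRect l T := by
  ext p
  simp only [trapezoid, MixedRect, mem_ofPred_eq, mem_prod, zero_mul, sub_zero]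

theorem trapezoid_subset_mixedRect (ha : 0 ≤ a) (hb : 0 ≤ b) :
    trapezoid l T a b ⊆ MixedRect l T := fun _ ⟨⟨hx₁, hx₂⟩, ht⟩ =>
  ⟨⟨(mul_nonneg ha ht.1).trans hx₁, hx₂.trans (sub_le_self _ (mul_nonneg hb ht.1))⟩, ht⟩

theorem isCompact_trapezoid (ha : 0 ≤ a) (hb : 0 ≤ b) : IsCompact (trapezoid l T a b) := by
  refine (isCompact_Icc.prod isCompact_Icc).of_isClosed_subset ?_
    (trapezoid_subset_mixedRect ha hb)
  change IsClosed ({p : ℝ × ℝ | a * p.2 ≤ p.1} ∩ {p | p.1 ≤ l - b * p.2} ∩ Prod.snd ⁻¹' Icc 0 T)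
  exact ((isClosed_le (by fun_prop) (by fun_prop)).inter
    (isClosed_le (by fun_prop) (by fun_prop))).inter (isClosed_Icc.preimage continuous_snd)

theorem eventually_nonneg_add_mul {α β : ℝ} (h : 0 < α ∨ 0 ≤ α ∧ 0 ≤ β) :
    ∀ᶠ s in 𝓝[>] (0 : ℝ), 0 ≤ α + β * s := by
  rcases h with hα | ⟨hα, hβ⟩
  · have : Tendsto (fun s : ℝ => α + β * s) (𝓝 0) (𝓝 α) :=
      (by fun_prop : Continuous fun s : ℝ => α + β * s).tendsto' 0 α (by simp)
    exact ((this.eventually (eventually_gt_nhds hα)).filter_mono nhdsWithin_le_nhds).mono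
      fun _ hs => hs.le
  · exact eventually_nhdsWithin_of_forall fun s hs => add_nonneg hα (mul_nonneg hβ (le_of_lt hs))

theorem neg_mem_posTangentConeAt_trapezoid {q : ℝ × ℝ} {c : ℝ} (hq : q ∈ trapezoid l T a b)
    (hq₂ : 0 < q.2) (hleft : q.1 = a * q.2 → c ≤ a) (hright : q.1 = l - b * q.2 → -b ≤ c) :
    ((-c, -1) : ℝ × ℝ) ∈ posTangentConeAt {p ∈ trapezoid l T a b | p.2 < q.2} q := by
  obtain ⟨⟨hx₁, hx₂⟩, -, hT⟩ := hq
  have hl : 0 < q.1 - a * q.2 ∨ 0 ≤ q.1 - a * q.2 ∧ 0 ≤ a - c := by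
    rcases hx₁.lt_or_eq with h | h
    · exact Or.inl (by linarith)
    · exact Or.inr ⟨by linarith, by linarith [hleft h.symm]⟩
  have hr : 0 < l - b * q.2 - q.1 ∨ 0 ≤ l - b * q.2 - q.1 ∧ 0 ≤ b + c := by
    rcases hx₂.lt_or_eq with h | h
    · exact Or.inl (by linarith)
    · exact Or.inr ⟨by linarith, by linarith [hright h]⟩
  refine mem_posTangentConeAt_of_frequently_mem (Eventually.frequently ?_)
  filter_upwards [self_mem_nhdsWithin, eventually_nonneg_add_mul hl, eventually_nonneg_add_mul hr,
    eventually_nonneg_add_mul (β := -1) (Or.inl hq₂),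
    eventually_nonneg_add_mul (β := 1) (Or.inr ⟨sub_nonneg.2 hT, zero_le_one⟩)]
    with s hs h₁ h₂ h₃ h₄
  simp only [mem_ofPred_eq, trapezoid, Prod.fst_add, Prod.snd_add, Prod.smul_mk, smul_eq_mul,
    mem_Icc]
  refine ⟨⟨⟨by linarith, by linarith⟩, by linarith, by linarith⟩, by linarith [mem_Ioi.1 hs]⟩

end Trapezoid

section Transport

variable {l T a b B C : ℝ} {u v g : ℝ × ℝ → ℝ} {Du : ℝ × ℝ → (ℝ × ℝ) →L[ℝ] ℝ}

theorem lt_of_transport_of_lt (ha : 0 ≤ a) (hb : 0 ≤ b)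
    (hu : ContinuousOn u (trapezoid l T a b))
    (hDu : ∀ p ∈ trapezoid l T a b, HasFDerivWithinAt u (Du p) (trapezoid l T a b) p)
    (hpde : ∀ p ∈ trapezoid l T a b, Du p (0, 1) + v p * Du p (1, 0) = g p)
    (hg : ∀ p ∈ trapezoid l T a b, g p < C) (h₀ : ∀ x ∈ Icc 0 l, u (x, 0) < B)
    (hedge : ∀ p ∈ trapezoid l T a b, B + C * p.2 ≤ u p →
      (p.1 = a * p.2 → v p ≤ a) ∧ (p.1 = l - b * p.2 → -b ≤ v p)) :
    ∀ p ∈ trapezoid l T a b, u p < B + C * p.2 := by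
  set D := trapezoid l T a b
  set w : ℝ × ℝ → ℝ := fun p => u p - C * p.2
  by_contra! hbad
  obtain ⟨p, hpD, hp⟩ := hbad
  -- the first time at which `u` reaches the barrier
  have hS : IsCompact (D ∩ w ⁻¹' Ici B) :=
    (isCompact_trapezoid ha hb).of_isClosed_subset
      ((hu.sub (continuousOn_const.mul continuous_snd.continuousOn)).preimage_isClosed_of_isClosed
        (isCompact_trapezoid ha hb).isClosed isClosed_Ici) inter_subset_left
  obtain ⟨q, ⟨hqD, hqS⟩, hqmin⟩ :=
    hS.exists_isMinOn ⟨p, hpD, by simp only [w, mem_preimage, mem_Ici]; linarith⟩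
      continuous_snd.continuousOn
  have hwq : B ≤ w q := hqS
  have hq₂ : 0 < q.2 := by
    refine hqD.2.1.lt_of_ne fun h => ?_
    obtain ⟨x, t⟩ := q
    obtain rfl : t = 0 := h.symm
    have hx : x ∈ Icc 0 l := by simpa using hqD.1
    simp only [w, mul_zero, sub_zero] at hwq
    linarith [h₀ x hx]
  have hmax : IsMaxOn w {r ∈ D | r.2 < q.2} q := fun r ⟨hrD, hr⟩ =>
    le_of_not_gt fun hwr => hr.not_ge (hqmin ⟨hrD, hwq.trans hwr.le⟩)
  obtain ⟨hleft, hright⟩ := hedge q hqD (by simp only [w] at hwq; linarith)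
  have hw : HasFDerivWithinAt w (Du q - C • ContinuousLinearMap.snd ℝ ℝ ℝ) {r ∈ D | r.2 < q.2} q :=
    ((hDu q hqD).mono (sep_subset _ _)).sub (hasFDerivWithinAt_snd.const_mul C)
  have hfermat := hmax.localize.hasFDerivWithinAt_nonpos hw
    (neg_mem_posTangentConeAt_trapezoid hqD hq₂ hleft hright)
  have hdir : Du q (-v q, -1) = -g q := by
    rw [← hpde q hqD, show ((-v q, -1) : ℝ × ℝ) = -(v q • ((1 : ℝ), (0 : ℝ)) + ((0 : ℝ), (1 : ℝ)))
      by simp, map_neg, map_add, map_smul, smul_eq_mul]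
    ring
  change Du q (-v q, -1) - C * (-1) ≤ 0 at hfermat
  rw [hdir] at hfermat
  linarith [hg q hqD]

theorem le_of_transport (ha : 0 ≤ a) (hb : 0 ≤ b)
    (hu : ContinuousOn u (trapezoid l T a b))
    (hDu : ∀ p ∈ trapezoid l T a b, HasFDerivWithinAt u (Du p) (trapezoid l T a b) p)
    (hpde : ∀ p ∈ trapezoid l T a b, Du p (0, 1) + v p * Du p (1, 0) = g p)
    (hg : ∀ p ∈ trapezoid l T a b, g p ≤ C) (h₀ : ∀ x ∈ Icc 0 l, u (x, 0) ≤ B)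
    (hedge : ∀ p ∈ trapezoid l T a b, B + C * p.2 < u p →
      (p.1 = a * p.2 → v p ≤ a) ∧ (p.1 = l - b * p.2 → -b ≤ v p)) :
    ∀ p ∈ trapezoid l T a b, u p ≤ B + C * p.2 := by
  intro p hp
  have ht : 0 ≤ p.2 := hp.2.1
  refine le_of_forall_pos_lt_add fun ε hε => ?_
  -- compare with the strict barrier `B + δ + (C + δ) t`, where `δ (1 + p.2) = ε`
  set δ := ε / (1 + p.2)
  have hδ : 0 < δ := by positivity
  have hstrict := lt_of_transport_of_lt (B := B + δ) (C := C + δ) ha hb hu hDu hpde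
    (fun r hr => (hg r hr).trans_lt (by linarith)) (fun x hx => (h₀ x hx).trans_lt (by linarith))
    (fun r hr hur => hedge r hr (by linarith [mul_nonneg hδ.le hr.2.1])) p hp
  have hε : δ * (1 + p.2) = ε := div_mul_cancel₀ _ (by positivity)
  linarith

theorem abs_le_of_transport (ha : 0 ≤ a) (hb : 0 ≤ b)
    (hu : ContinuousOn u (trapezoid l T a b))
    (hDu : ∀ p ∈ trapezoid l T a b, HasFDerivWithinAt u (Du p) (trapezoid l T a b) p)
    (hpde : ∀ p ∈ trapezoid l T a b, Du p (0, 1) + v p * Du p (1, 0) = g p)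
    (hg : ∀ p ∈ trapezoid l T a b, |g p| ≤ C) (h₀ : ∀ x ∈ Icc 0 l, |u (x, 0)| ≤ B)
    (hedge : ∀ p ∈ trapezoid l T a b, B + C * p.2 < |u p| →
      (p.1 = a * p.2 → v p ≤ a) ∧ (p.1 = l - b * p.2 → -b ≤ v p)) :
    ∀ p ∈ trapezoid l T a b, |u p| ≤ B + C * p.2 := by
  intro p hp
  refine abs_le.2 ⟨neg_le.1 ?_, ?_⟩
  · refine le_of_transport (u := fun p => -u p) (Du := fun p => -Du p) (g := fun p => -g p) ha hb
      hu.neg (fun r hr => (hDu r hr).neg) (fun r hr => ?_)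
      (fun r hr => neg_le.1 (neg_le_of_abs_le (hg r hr)))
      (fun x hx => neg_le.1 (neg_le_of_abs_le (h₀ x hx)))
      (fun r hr hur => hedge r hr (hur.trans_le (neg_le_abs _))) p hp
    change -Du r (0, 1) + v r * -Du r (1, 0) = -g r
    linarith [hpde r hr]
  · exact le_of_transport ha hb hu hDu hpde (fun r hr => le_of_abs_le (hg r hr))
      (fun x hx => le_of_abs_le (h₀ x hx))
      (fun r hr hur => hedge r hr (hur.trans_le (le_abs_self _)))
      p hp

end Transport

theorem abs_le_add_mul_of_lipschitz {n : ℕ} {f : (Fin n → ℝ) → ℝ} {L M₀ K : ℝ} (hL : 0 ≤ L)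
    (hf : ∀ y₁ y₂, |f y₁ - f y₂| ≤ L * ∑ j, |y₁ j - y₂ j|) (h₀ : |f 0| ≤ M₀) {y : Fin n → ℝ}
    (hy : ∀ j, |y j| ≤ K) : |f y| ≤ M₀ + L * (n * K) := by
  have hsum : ∑ j, |y j - (0 : Fin n → ℝ) j| ≤ n * K :=
    calc ∑ j, |y j - (0 : Fin n → ℝ) j| = ∑ j, |y j| := by simp
      _ ≤ ∑ _j : Fin n, K := Finset.sum_le_sum fun j _ => hy j
      _ = n * K := by simp
  linarith [abs_sub_abs_le_abs_sub (f y) (f 0), hf y 0, mul_le_mul_of_nonneg_left hsum hL]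

theorem le_one_div_mul_of_le_add_mul {M K q : ℝ} (hq : q < 1) (h : M ≤ K + q * M) :
    M ≤ 1 / (1 - q) * K := by
  rw [one_div_mul_eq_div, le_div_iff₀ (sub_pos.2 hq)]
  linarith

section MixedProblem

variable {n k : ℕ} {l T : ℝ} {Λ : ℝ × ℝ → Fin n → ℝ} {F : ℝ × ℝ → (Fin n → ℝ) → Fin n → ℝ}
  {A : ℝ → Fin n → ℝ} {H : ℝ → (Fin n → ℝ) → Fin n → ℝ} {U : ℝ × ℝ → Fin n → ℝ}

theorem IsMixedSolution.abs_le_on_trapezoid (hsol : IsMixedSolution n k l T Λ F A H U)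
    (hU : ContDiffOn ℝ 1 U (MixedRect l T)) {a b B C : ℝ} (ha : 0 ≤ a) (hb : 0 ≤ b) (i : Fin n)
    (hF : ∀ p ∈ MixedRect l T, |F p (U p) i| ≤ C) (hA : ∀ x ∈ Icc 0 l, |A x i| ≤ B)
    (hedge : ∀ p ∈ trapezoid l T a b, B + C * p.2 < |U p i| →
      (p.1 = a * p.2 → Λ p i ≤ a) ∧ (p.1 = l - b * p.2 → -b ≤ Λ p i)) :
    ∀ p ∈ trapezoid l T a b, |U p i| ≤ B + C * p.2 := by
  have hsub := trapezoid_subset_mixedRect (l := l) (T := T) ha hb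
  have hUi : ContDiffOn ℝ 1 (fun q => U q i) (MixedRect l T) := contDiffOn_pi.1 hU i
  exact abs_le_of_transport ha hb (hUi.continuousOn.mono hsub)
    (fun p hp => ((hUi.differentiableOn one_ne_zero p (hsub hp)).hasFDerivWithinAt).mono hsub)
    (fun p hp => hsol.1 p (hsub hp) i) (fun p hp => hF p (hsub hp))
    (fun x hx => hsol.2.1 x hx i ▸ hA x hx) hedge

theorem IsMixedSolution.abs_bTrace_le (hsol : IsMixedSolution n k l T Λ F A H U)
    (hU : ContDiffOn ℝ 1 U (MixedRect l T)) (hhyp : HyperbolicOn n k Λ (MixedRect l T))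
    {MΛ B C : ℝ} (hΛ : ∀ p ∈ MixedRect l T, ∀ i, |Λ p i| ≤ MΛ) (hMΛ : 0 ≤ MΛ)
    (hMΛl : T * MΛ ≤ l) (hF : ∀ p ∈ MixedRect l T, ∀ i, |F p (U p) i| ≤ C)
    (hA : ∀ x ∈ Icc 0 l, ∀ i, |A x i| ≤ B) :
    ∀ t ∈ Icc 0 T, ∀ j, |bTrace n k l U t j| ≤ B + C * t := by
  intro t ht j
  have hMt : MΛ * t ≤ l := by nlinarith [ht.1, ht.2]
  by_cases hj : (j : ℕ) < k
  · rw [bTrace, if_pos hj]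
    refine hsol.abs_le_on_trapezoid hU le_rfl hMΛ j (fun p hp => hF p hp j) (fun x hx => hA x hx j)
      (fun p hp _ => ?_) (0, t) ⟨⟨by simp, by simpa using hMt⟩, ht⟩
    have hpR := trapezoid_subset_mixedRect le_rfl hMΛ hp
    exact ⟨fun _ => ((hhyp p hpR j).1 hj).le, fun _ => neg_le_of_abs_le (hΛ p hpR j)⟩
  · rw [bTrace, if_neg hj]
    refine hsol.abs_le_on_trapezoid hU hMΛ le_rfl j (fun p hp => hF p hp j) (fun x hx => hA x hx j)
      (fun p hp _ => ?_) (l, t) ⟨⟨by simpa using hMt, by simp⟩, ht⟩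
    have hpR := trapezoid_subset_mixedRect hMΛ le_rfl hp
    exact ⟨fun _ => le_of_abs_le (hΛ p hpR j),
      fun _ => by simpa using ((hhyp p hpR j).2 (not_lt.1 hj)).le⟩

theorem IsMixedSolution.abs_le_of_abs_boundary_le (hsol : IsMixedSolution n k l T Λ F A H U)
    (hU : ContDiffOn ℝ 1 U (MixedRect l T)) (hhyp : HyperbolicOn n k Λ (MixedRect l T))
    {B C : ℝ} (hF : ∀ p ∈ MixedRect l T, ∀ i, |F p (U p) i| ≤ C)
    (hA : ∀ x ∈ Icc 0 l, ∀ i, |A x i| ≤ B)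
    (hH : ∀ t ∈ Icc 0 T, ∀ i, |H t (bTrace n k l U t) i| ≤ B) :
    ∀ p ∈ MixedRect l T, ∀ i, |U p i| ≤ B + C * p.2 := by
  intro p hp i
  refine hsol.abs_le_on_trapezoid hU le_rfl le_rfl i (fun q hq => hF q hq i)
    (fun x hx => hA x hx i) (fun q hq hexc => ?_) p (trapezoid_zero_zero ▸ hp)
  obtain ⟨x, t⟩ := q
  rw [trapezoid_zero_zero] at hq
  have hCt : 0 ≤ C * t := mul_nonneg ((abs_nonneg _).trans (hF _ hq i)) hq.2.1
  have hbdry := hsol.2.2 t hq.2 i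
  constructor
  · intro hx
    simp only [zero_mul] at hx
    subst hx
    rcases lt_or_ge (i : ℕ) k with hi | hi
    · exact ((hhyp _ hq i).1 hi).le
    · rw [hbdry.1 hi] at hexc
      linarith [hH t hq.2 i]
  · intro hx
    simp only [zero_mul, sub_zero] at hx
    subst hx
    rcases lt_or_ge (i : ℕ) k with hi | hi
    · rw [hbdry.2 hi] at hexc
      linarith [hH t hq.2 i]
    · simpa using ((hhyp _ hq i).2 hi).le

theorem IsMixedSolution.abs_le_of_abs_source_le (hsol : IsMixedSolution n k l T Λ F A H U)
    (hU : ContDiffOn ℝ 1 U (MixedRect l T)) (hhyp : HyperbolicOn n k Λ (MixedRect l T))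
    {LH MΛ MA MH₀ C : ℝ} (hLH : 0 ≤ LH) (hLipH : LipschitzHOn n H T LH)
    (hΛ : ∀ p ∈ MixedRect l T, ∀ i, |Λ p i| ≤ MΛ) (hMΛl : T * MΛ ≤ l)
    (hF : ∀ p ∈ MixedRect l T, ∀ i, |F p (U p) i| ≤ C) (hA : ∀ x ∈ Icc 0 l, ∀ i, |A x i| ≤ MA)
    (hH₀ : ∀ t ∈ Icc 0 T, ∀ i, |H t 0 i| ≤ MH₀) :
    ∀ p ∈ MixedRect l T, ∀ i, |U p i| ≤ MA + (MH₀ + LH * (n * (MA + C * T))) + C * T := by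
  intro p hp i
  have hl : 0 ≤ l := hp.1.1.trans hp.1.2
  have hT : 0 ≤ T := hp.2.1.trans hp.2.2
  have hMA : 0 ≤ MA := (abs_nonneg _).trans (hA 0 ⟨le_rfl, hl⟩ i)
  have hMH₀ : 0 ≤ MH₀ := (abs_nonneg _).trans (hH₀ 0 ⟨le_rfl, hT⟩ i)
  have hC : 0 ≤ C := (abs_nonneg _).trans (hF p hp i)
  have hMΛ : 0 ≤ MΛ := (abs_nonneg _).trans (hΛ p hp i)
  have htrace : ∀ t ∈ Icc 0 T, ∀ j, |bTrace n k l U t j| ≤ MA + C * T := fun t ht j =>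
    (hsol.abs_bTrace_le hU hhyp hΛ hMΛ hMΛl hF hA t ht j).trans (by gcongr; exact ht.2)
  have hbdry : ∀ t ∈ Icc 0 T, ∀ j, |H t (bTrace n k l U t) j| ≤ MH₀ + LH * (n * (MA + C * T)) :=
    fun t ht j => abs_le_add_mul_of_lipschitz hLH (hLipH t ht j) (hH₀ t ht j) (htrace t ht)
  have hX : 0 ≤ MH₀ + LH * (n * (MA + C * T)) := by positivity
  set X := MH₀ + LH * (n * (MA + C * T))
  refine (hsol.abs_le_of_abs_boundary_le (B := MA + X) hU hhyp hF
    (fun x hx j => (hA x hx j).trans (by linarith))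
    (fun t ht j => (hbdry t ht j).trans (by linarith)) p hp i).trans ?_
  gcongr
  exact hp.2.2

end MixedProblem

theorem statement4_general
    (n k : ℕ)
    (l t₀ : ℝ)
    (Λ : ℝ × ℝ → Fin n → ℝ) (F : ℝ × ℝ → (Fin n → ℝ) → Fin n → ℝ)
    (A : ℝ → Fin n → ℝ) (H : ℝ → (Fin n → ℝ) → Fin n → ℝ)
    (hhyp : HyperbolicOn n k Λ (MixedRect l t₀))
    (LF LH : ℝ) (hLF : 0 ≤ LF) (hLH : 0 ≤ LH)
    (hLipF : LipschitzFOn n F (MixedRect l t₀) LF)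
    (hLipH : LipschitzHOn n H t₀ LH)
    (hq₀ : (n : ℝ) * LF * (1 + n * LH) * t₀ < 1)
    (MΛ : ℝ) (hMΛ : ∀ p ∈ MixedRect l t₀, ∀ i : Fin n, |Λ p i| ≤ MΛ)
    (hMΛl : t₀ * MΛ < l) :
    ∀ U : ℝ × ℝ → Fin n → ℝ,
      ContDiffOn ℝ 1 U (MixedRect l t₀) →
      IsMixedSolution n k l t₀ Λ F A H U →
      ∀ MA MF0 MH0 : ℝ,
        (∀ x ∈ Set.Icc (0 : ℝ) l, ∀ i : Fin n, |A x i| ≤ MA) →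
        (∀ p ∈ MixedRect l t₀, ∀ i : Fin n, |F p 0 i| ≤ MF0) →
        (∀ t ∈ Set.Icc (0 : ℝ) t₀, ∀ i : Fin n, |H t 0 i| ≤ MH0) →
        ∀ p ∈ MixedRect l t₀, ∀ i : Fin n,
          |U p i| ≤ (1 / (1 - (n : ℝ) * LF * (1 + n * LH) * t₀)) *
            ((MA + t₀ * MF0) * (1 + n * LH) + MH0) := by
  intro U hU hsol MA MF0 MH0 hMA hMF0 hMH0 p hp i
  have : Nonempty (Fin n) := ⟨i⟩
  obtain ⟨p₀, hp₀, hmax⟩ :=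
    (isCompact_Icc.prod isCompact_Icc).exists_isMaxOn ⟨p, hp⟩ hU.continuousOn.norm
  set M := ‖U p₀‖
  have hUM : ∀ q ∈ MixedRect l t₀, ∀ j, |U q j| ≤ M := fun q hq j =>
    (norm_le_pi_norm (U q) j).trans (hmax hq)
  have hFM : ∀ q ∈ MixedRect l t₀, ∀ j, |F q (U q) j| ≤ MF0 + LF * (n * M) := fun q hq j =>
    abs_le_add_mul_of_lipschitz hLF (hLipF q hq j) (hMF0 q hq j) (hUM q hq)
  have hM : M ≤ MA + (MH0 + LH * (n * (MA + (MF0 + LF * (n * M)) * t₀)))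
      + (MF0 + LF * (n * M)) * t₀ := (pi_norm_le_iff_of_nonempty _).2 fun j => by
    rw [Real.norm_eq_abs]
    exact hsol.abs_le_of_abs_source_le hU hhyp hLH hLipH hMΛ hMΛl.le hFM hMA hMH0 p₀ hp₀ j
  exact (hUM p hp i).trans (le_one_div_mul_of_le_add_mul hq₀ (hM.trans_eq (by ring)))

/-- Local a priori sup-norm estimate for the semilinear hyperbolic mixed
problem. With continuous data, hyperbolicity and the Lipschitz hypotheses, set
`q₀ = n L_F (1 + n L_H)`; let `t₀ > 0` satisfy `q₀ t₀ < 1` and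
`t₀ · max_i sup |Λ_i| < l` (the sup over `[0,l] × [0,t₀]` being encoded through an
upper bound `MΛ`). Then every `C¹` solution `U` of the mixed problem on
`[0,l] × [0,t₀]` satisfies, for any upper bounds `MA, MF0, MH0` of
`max_i sup |A_i|`, `max_i sup |F_i(·,·,0)|`, `max_i sup |H_i(·,0)|` respectively,
`max_i sup |U_i| ≤ (1/(1 − q₀t₀)) ((MA + t₀ MF0)(1 + n L_H) + MH0)`. -/
theorem statement4
    (n k : ℕ) (hn : 1 ≤ n) (hk : 1 ≤ k) (hkn : k ≤ n)
    (l t₀ : ℝ) (hl : 0 < l) (ht₀ : 0 < t₀)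
    (Λ : ℝ × ℝ → Fin n → ℝ) (F : ℝ × ℝ → (Fin n → ℝ) → Fin n → ℝ)
    (A : ℝ → Fin n → ℝ) (H : ℝ → (Fin n → ℝ) → Fin n → ℝ)
    (hΛ : ContinuousOn Λ (MixedRect l t₀))
    (hF : ContinuousOn (fun q : (ℝ × ℝ) × (Fin n → ℝ) => F q.1 q.2)
      (MixedRect l t₀ ×ˢ (Set.univ : Set (Fin n → ℝ))))
    (hH : ContinuousOn (fun q : ℝ × (Fin n → ℝ) => H q.1 q.2)
      (Set.Icc (0 : ℝ) t₀ ×ˢ (Set.univ : Set (Fin n → ℝ))))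
    (hA : ContinuousOn A (Set.Icc 0 l))
    (hhyp : HyperbolicOn n k Λ (MixedRect l t₀))
    (LF LH : ℝ) (hLF : 0 ≤ LF) (hLH : 0 ≤ LH)
    (hLipF : LipschitzFOn n F (MixedRect l t₀) LF)
    (hLipH : LipschitzHOn n H t₀ LH)
    (hq₀ : (n : ℝ) * LF * (1 + n * LH) * t₀ < 1)
    (MΛ : ℝ) (hMΛ : ∀ p ∈ MixedRect l t₀, ∀ i : Fin n, |Λ p i| ≤ MΛ)
    (hMΛl : t₀ * MΛ < l) :
    ∀ U : ℝ × ℝ → Fin n → ℝ,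
      ContDiffOn ℝ 1 U (MixedRect l t₀) →
      IsMixedSolution n k l t₀ Λ F A H U →
      ∀ MA MF0 MH0 : ℝ,
        (∀ x ∈ Set.Icc (0 : ℝ) l, ∀ i : Fin n, |A x i| ≤ MA) →
        (∀ p ∈ MixedRect l t₀, ∀ i : Fin n, |F p 0 i| ≤ MF0) →
        (∀ t ∈ Set.Icc (0 : ℝ) t₀, ∀ i : Fin n, |H t 0 i| ≤ MH0) →
        ∀ p ∈ MixedRect l t₀, ∀ i : Fin n,
          |U p i| ≤ (1 / (1 - (n : ℝ) * LF * (1 + n * LH) * t₀)) *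
            ((MA + t₀ * MF0) * (1 + n * LH) + MH0) :=
  statement4_general n k l t₀ Λ F A H hhyp LF LH hLF hLH hLipF hLipH hq₀ MΛ hMΛ hMΛl
end
end

section
/- Local stability of the semilinear hyperbolic mixed problem under perturbation of the data: Suppose Λ, F, H, A are continuous, the hyperbolicity condition holds, and the Lipschitz hypotheses hold with constants L_F, L_H ≥ 0. Set q₀ = n·L_F·(1 + n·L_H) and let t₀ > 0 satisfy q₀·t₀ < 1 and t₀ · max_{1≤i≤n} sup_{[0,l]×[0,t₀]} |Λ_i| < l. Let M¹ : [0,l]×[0,t₀] → ℝⁿ, M² : [0,l] → ℝⁿ, M³ : [0,t₀] → ℝⁿ be continuous. Suppose W is a continuously differentiable solution of the mixed problem on [0,l]×[0,t₀], and U is a continuously differentiable function satisfying the perturbed problem: ∂_t U_i + Λ_i ∂_x U_i = F_i(x,t,U) + M¹_i(x,t) on [0,l]×[0,t₀], U(x,0) = A(x) + M²(x), and the boundary conditions (iii) with right-hand sides H_i(t,V(t)) + M³_i(t). Then max_{1≤i≤n} sup_{[0,l]×[0,t₀]} |U_i − W_i| ≤ (1/(1 − q₀t₀)) · [ ( max_i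 sup_x |M²_i(x)| + t₀ · max_i sup_{(x,t)} |M¹_i(x,t)| ) · (1 + n·L_H) + max_i sup_t |M³_i(t)| ]. -/
open Set

noncomputable section

/-!
Write `g = U - W` and `d = max |g|` over the rectangle. Each component satisfies
`|∂ₜ gᵢ + Λᵢ ∂ₓ gᵢ| ≤ c := n L_F d + m₁`, so along backward characteristics `|gᵢ|` grows at
rate at most `c`: at a maximum of `gᵢ - c' t` (`c' > c`) on a compact set invariant under the
backward characteristic flow, that flow must have left the set, i.e. the point lies on `t = 0`
or on the inflow edge. Applied to the backward cone of slope `max |Λ|` from an outflow point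
(which never reaches the inflow edge, since `t₀ max |Λ| < l`), this bounds the traces `V` by
`m₂ + c t₀`; the Lipschitz boundary condition then bounds `g` on the inflow edges by
`n L_H (m₂ + c t₀) + m₃`, and the same principle on the whole rectangle gives
`d ≤ (m₂ + c t₀)(1 + n L_H) + m₃`, which is solved for `d` using `q₀ t₀ < 1`.
-/

open Filter Topology

theorem HasFDerivWithinAt.eventually_add_mul_lt_of_lt_apply {E : Type*} [NormedAddCommGroup E]
    [NormedSpace ℝ E] {g : E → ℝ} {L : E →L[ℝ] ℝ} {s : Set E} {p u : E} {a : ℝ}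
    (hg : HasFDerivWithinAt g L s p) (hu : ∀ᶠ ε in 𝓝[>] (0 : ℝ), p + ε • u ∈ s)
    (ha : a < L u) : ∀ᶠ ε in 𝓝[>] (0 : ℝ), g p + a * ε < g (p + ε • u) := by
  set r : Set ℝ := {ε | p + ε • u ∈ s} ∩ Ioi 0
  have hr : r ∈ 𝓝[>] (0 : ℝ) := inter_mem hu self_mem_nhdsWithin
  have hline : HasDerivWithinAt (fun ε : ℝ => p + ε • u) u r 0 := by
    simpa using (((hasDerivAt_id (0 : ℝ)).smul_const u).const_add p).hasDerivWithinAt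
  have hcomp : HasDerivWithinAt (fun ε : ℝ => g (p + ε • u)) (L u) r 0 :=
    hg.comp_hasDerivWithinAt_of_eq 0 hline (fun _ hε => hε.1) (by simp)
  have hslope := (hasDerivWithinAt_iff_tendsto_slope' fun h => lt_irrefl (0 : ℝ) h.2).mp hcomp
  filter_upwards [(hslope.mono_left (nhdsWithin_le_of_mem hr)).eventually (lt_mem_nhds ha),
    self_mem_nhdsWithin] with ε hslope_gt (hε : 0 < ε)
  rw [slope_def_field, zero_smul, add_zero, sub_zero, lt_div_iff₀ hε] at hslope_gt
  linarith

section TransportInequality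

variable {S E : Set (ℝ × ℝ)} {g v : ℝ × ℝ → ℝ} {b c : ℝ}

theorem le_add_mul_of_transport_le_of_lt (hS : IsCompact S) (hS₀ : ∀ p ∈ S, 0 ≤ p.2)
    (hg : ContinuousOn g S) {c' : ℝ} (hcc' : c < c')
    (hder : ∀ p ∈ S \ E, ∃ L : ℝ × ℝ →L[ℝ] ℝ, HasFDerivWithinAt g L S p ∧ L (v p, 1) ≤ c)
    (hback : ∀ p ∈ S \ E, ∀ᶠ ε in 𝓝[>] (0 : ℝ), p - ε • (v p, 1) ∈ S)
    (hexit : ∀ p ∈ S ∩ E, g p ≤ b + c * p.2) {p : ℝ × ℝ} (hp : p ∈ S) :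
    g p ≤ b + c' * p.2 := by
  obtain ⟨q, hqS, hmax⟩ := hS.exists_isMaxOn ⟨p, hp⟩
    (hg.sub (continuousOn_const.mul continuous_snd.continuousOn) :
      ContinuousOn (fun q : ℝ × ℝ => g q - c' * q.2) S)
  replace hmax : ∀ x ∈ S, g x - c' * x.2 ≤ g q - c' * q.2 := fun x hx => hmax hx
  suffices g q - c' * q.2 ≤ b by linarith [hmax p hp]
  by_cases hqE : q ∈ E
  · nlinarith [hexit q ⟨hqS, hqE⟩, hS₀ q hqS]
  -- backwards along the characteristic, `g - c' t` would increase strictly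
  obtain ⟨L, hL, hLc⟩ := hder q ⟨hqS, hqE⟩
  have hback' : ∀ᶠ ε in 𝓝[>] (0 : ℝ), q + ε • -(v q, 1) ∈ S := by
    simpa only [smul_neg, ← sub_eq_add_neg] using hback q ⟨hqS, hqE⟩
  have hgrow := hL.eventually_add_mul_lt_of_lt_apply hback' (a := -c')
    (by rw [map_neg]; linarith)
  obtain ⟨ε, hε, hmem⟩ := (hgrow.and hback').exists
  have hsnd : (q + ε • -(v q, 1)).2 = q.2 - ε := by simp [sub_eq_add_neg]
  have hle := hmax _ hmem
  rw [hsnd] at hle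
  linarith

theorem le_add_mul_of_transport_le (hS : IsCompact S) (hS₀ : ∀ p ∈ S, 0 ≤ p.2)
    (hg : ContinuousOn g S)
    (hder : ∀ p ∈ S \ E, ∃ L : ℝ × ℝ →L[ℝ] ℝ, HasFDerivWithinAt g L S p ∧ L (v p, 1) ≤ c)
    (hback : ∀ p ∈ S \ E, ∀ᶠ ε in 𝓝[>] (0 : ℝ), p - ε • (v p, 1) ∈ S)
    (hexit : ∀ p ∈ S ∩ E, g p ≤ b + c * p.2) {p : ℝ × ℝ} (hp : p ∈ S) :
    g p ≤ b + c * p.2 := by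
  have hlim : Tendsto (fun c' : ℝ => b + c' * p.2) (𝓝[>] c) (𝓝 (b + c * p.2)) :=
    ((continuous_const.add (continuous_id.mul continuous_const)).tendsto c).mono_left
      nhdsWithin_le_nhds
  exact ge_of_tendsto hlim <| eventually_nhdsWithin_of_forall fun _ hc' =>
    le_add_mul_of_transport_le_of_lt hS hS₀ hg hc' hder hback hexit hp

theorem abs_le_add_mul_of_transport_le (hS : IsCompact S) (hS₀ : ∀ p ∈ S, 0 ≤ p.2)
    (hg : ContinuousOn g S)
    (hder : ∀ p ∈ S \ E, ∃ L : ℝ × ℝ →L[ℝ] ℝ, HasFDerivWithinAt g L S p ∧ |L (v p, 1)| ≤ c)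
    (hback : ∀ p ∈ S \ E, ∀ᶠ ε in 𝓝[>] (0 : ℝ), p - ε • (v p, 1) ∈ S)
    (hexit : ∀ p ∈ S ∩ E, |g p| ≤ b + c * p.2) {p : ℝ × ℝ} (hp : p ∈ S) :
    |g p| ≤ b + c * p.2 := by
  refine abs_le'.mpr ⟨?_, ?_⟩
  · refine le_add_mul_of_transport_le hS hS₀ hg (fun q hq => ?_) hback
      (fun q hq => (le_abs_self _).trans (hexit q hq)) hp
    obtain ⟨L, hL, hLc⟩ := hder q hq
    exact ⟨L, hL, (le_abs_self _).trans hLc⟩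
  · refine le_add_mul_of_transport_le (g := fun q => -g q) hS hS₀ hg.neg (fun q hq => ?_) hback
      (fun q hq => (neg_le_abs _).trans (hexit q hq)) hp
    obtain ⟨L, hL, hLc⟩ := hder q hq
    exact ⟨-L, hL.neg, (neg_le_abs _).trans hLc⟩

end TransportInequality

theorem eventually_sub_mul_mem_Icc {a b x μ : ℝ} (hx : x ∈ Icc a b) (ha : a < x ∨ μ ≤ 0)
    (hb : x < b ∨ 0 ≤ μ) : ∀ᶠ ε in 𝓝[>] (0 : ℝ), x - ε * μ ∈ Icc a b := by
  have hlim : Tendsto (fun ε : ℝ => x - ε * μ) (𝓝[>] 0) (𝓝 x) := by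
    have hcont : Continuous (fun ε : ℝ => x - ε * μ) := by fun_prop
    simpa using (hcont.tendsto 0).mono_left nhdsWithin_le_nhds
  have hlow : ∀ᶠ ε in 𝓝[>] (0 : ℝ), a ≤ x - ε * μ := by
    rcases ha with ha | hμ
    · exact hlim.eventually_const_le ha
    · filter_upwards [self_mem_nhdsWithin] with ε (hε : 0 < ε)
      nlinarith [hx.1]
  have hup : ∀ᶠ ε in 𝓝[>] (0 : ℝ), x - ε * μ ≤ b := by
    rcases hb with hb | hμ
    · exact hlim.eventually_le_const hb
    · filter_upwards [self_mem_nhdsWithin] with ε (hε : 0 < ε)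
      nlinarith [hx.2]
  exact hlow.and hup

theorem isCompact_mixedRect (l T : ℝ) : IsCompact (MixedRect l T) :=
  isCompact_Icc.prod isCompact_Icc

theorem eventually_sub_smul_mem_mixedRect {l T μ : ℝ} {p : ℝ × ℝ} (hp : p ∈ MixedRect l T)
    (ht : 0 < p.2) (h₀ : 0 < p.1 ∨ μ ≤ 0) (hl : p.1 < l ∨ 0 ≤ μ) :
    ∀ᶠ ε in 𝓝[>] (0 : ℝ), p - ε • (μ, 1) ∈ MixedRect l T := by
  filter_upwards [eventually_sub_mul_mem_Icc hp.1 h₀ hl,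
    eventually_sub_mul_mem_Icc hp.2 (.inl ht) (.inr zero_le_one)] with ε hx ht
  exact ⟨by simpa using hx, by simpa using ht⟩

def backwardCone (x₀ τ M : ℝ) : Set (ℝ × ℝ) := {p | |p.1 - x₀| ≤ M * (τ - p.2)}

theorem isClosed_backwardCone (x₀ τ M : ℝ) : IsClosed (backwardCone x₀ τ M) :=
  isClosed_le (by fun_prop) (by fun_prop)

theorem sub_smul_mem_backwardCone {x₀ τ M μ ε : ℝ} {p : ℝ × ℝ}
    (hp : p ∈ backwardCone x₀ τ M) (hμ : |μ| ≤ M) (hε : 0 ≤ ε) :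
    p - ε • (μ, 1) ∈ backwardCone x₀ τ M := by
  have hp' : |p.1 - x₀| ≤ M * (τ - p.2) := hp
  show |p.1 - ε * μ - x₀| ≤ M * (τ - (p.2 - ε * 1))
  calc |p.1 - ε * μ - x₀| = |(p.1 - x₀) - ε * μ| := by rw [sub_right_comm]
    _ ≤ |p.1 - x₀| + |ε * μ| := abs_sub _ _
    _ = |p.1 - x₀| + ε * |μ| := by rw [abs_mul, abs_of_nonneg hε]
    _ ≤ M * (τ - (p.2 - ε * 1)) := by nlinarith

/-- The edge on which the `i`-th component is prescribed: its characteristics enter there. -/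
def inflowEdge (k : ℕ) (l : ℝ) (i : ℕ) : ℝ := if i < k then l else 0

def outflowEdge (k : ℕ) (l : ℝ) (i : ℕ) : ℝ := if i < k then 0 else l

theorem abs_inflowEdge_sub_outflowEdge {l : ℝ} (hl : 0 ≤ l) (k i : ℕ) :
    |inflowEdge k l i - outflowEdge k l i| = l := by
  unfold inflowEdge outflowEdge
  split_ifs <;> simp [abs_of_nonneg hl]

theorem outflowEdge_mem_Icc {l : ℝ} (hl : 0 ≤ l) (k i : ℕ) : outflowEdge k l i ∈ Icc 0 l := by
  unfold outflowEdge
  split_ifs <;> simp [hl]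

theorem bTrace_apply (n k : ℕ) (l : ℝ) (U : ℝ × ℝ → Fin n → ℝ) (t : ℝ) (i : Fin n) :
    bTrace n k l U t i = U (outflowEdge k l i, t) i := by
  unfold bTrace outflowEdge
  split_ifs <;> rfl

section MixedProblem

variable {n k : ℕ} {l T : ℝ} {Λ : ℝ × ℝ → Fin n → ℝ}

theorem HyperbolicOn.eventually_backward_mem_mixedRect
    (hhyp : HyperbolicOn n k Λ (MixedRect l T)) {p : ℝ × ℝ} (hp : p ∈ MixedRect l T)
    (ht : 0 < p.2) {i : Fin n} (hx : p.1 ≠ inflowEdge k l i) :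
    ∀ᶠ ε in 𝓝[>] (0 : ℝ), p - ε • (Λ p i, 1) ∈ MixedRect l T := by
  unfold inflowEdge at hx
  split_ifs at hx with hi
  · exact eventually_sub_smul_mem_mixedRect hp ht (.inr ((hhyp p hp i).1 hi).le)
      (.inl (lt_of_le_of_ne hp.1.2 hx))
  · exact eventually_sub_smul_mem_mixedRect hp ht (.inl (lt_of_le_of_ne hp.1.1 hx.symm))
      (.inr ((hhyp p hp i).2 (not_lt.mp hi)).le)

theorem IsMixedSolution.inflow_eq {F : ℝ × ℝ → (Fin n → ℝ) → Fin n → ℝ} {A : ℝ → Fin n → ℝ}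
    {H : ℝ → (Fin n → ℝ) → Fin n → ℝ} {U : ℝ × ℝ → Fin n → ℝ}
    (hU : IsMixedSolution n k l T Λ F A H U) {t : ℝ} (ht : t ∈ Icc 0 T) (i : Fin n) :
    U (inflowEdge k l i, t) i = H t (bTrace n k l U t) i := by
  unfold inflowEdge
  split_ifs with hi
  · exact (hU.2.2 t ht i).2 hi
  · exact (hU.2.2 t ht i).1 (not_lt.mp hi)

theorem IsMixedSolution.exists_hasFDerivWithinAt_sub
    {F₁ F₂ : ℝ × ℝ → (Fin n → ℝ) → Fin n → ℝ} {A₁ A₂ : ℝ → Fin n → ℝ}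
    {H₁ H₂ : ℝ → (Fin n → ℝ) → Fin n → ℝ} {U W : ℝ × ℝ → Fin n → ℝ}
    (hUsol : IsMixedSolution n k l T Λ F₁ A₁ H₁ U) (hWsol : IsMixedSolution n k l T Λ F₂ A₂ H₂ W)
    (hU : DifferentiableOn ℝ U (MixedRect l T)) (hW : DifferentiableOn ℝ W (MixedRect l T))
    {p : ℝ × ℝ} (hp : p ∈ MixedRect l T) (i : Fin n) :
    ∃ L : ℝ × ℝ →L[ℝ] ℝ, HasFDerivWithinAt (fun q => U q i - W q i) L (MixedRect l T) p ∧
      L (Λ p i, 1) = F₁ p (U p) i - F₂ p (W p) i := by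
  have hsplit : ∀ L : ℝ × ℝ →L[ℝ] ℝ, L (Λ p i, 1) = L (0, 1) + Λ p i * L (1, 0) := by
    intro L
    rw [← smul_eq_mul, ← map_smul, ← map_add]
    simp
  refine ⟨_, ((differentiableWithinAt_pi.mp (hU p hp)) i).hasFDerivWithinAt.sub
    ((differentiableWithinAt_pi.mp (hW p hp)) i).hasFDerivWithinAt, ?_⟩
  rw [sub_apply, hsplit, hsplit, hUsol.1 p hp i, hWsol.1 p hp i]

theorem HyperbolicOn.abs_le_of_exit_le (hhyp : HyperbolicOn n k Λ (MixedRect l T)) {i : Fin n}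
    {C : Set (ℝ × ℝ)} (hC : IsClosed C)
    (hCback : ∀ p ∈ MixedRect l T ∩ C, ∀ ε : ℝ, 0 < ε → p - ε • (Λ p i, 1) ∈ C)
    {g : ℝ × ℝ → ℝ} (hg : ContinuousOn g (MixedRect l T)) {b c : ℝ}
    (hder : ∀ p ∈ MixedRect l T, ∃ L : ℝ × ℝ →L[ℝ] ℝ,
      HasFDerivWithinAt g L (MixedRect l T) p ∧ |L (Λ p i, 1)| ≤ c)
    (hexit : ∀ p ∈ MixedRect l T ∩ C, (p.2 = 0 ∨ p.1 = inflowEdge k l i) →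
      |g p| ≤ b + c * p.2)
    {p : ℝ × ℝ} (hp : p ∈ MixedRect l T ∩ C) : |g p| ≤ b + c * p.2 := by
  refine abs_le_add_mul_of_transport_le (v := fun q => Λ q i)
    (E := {p | p.2 = 0 ∨ p.1 = inflowEdge k l i})
    ((isCompact_mixedRect l T).inter_right hC) (fun p hp => hp.1.2.1) (hg.mono inter_subset_left)
    (fun q hq => ?_) (fun q hq => ?_) (fun q hq => hexit q hq.1 hq.2) hp
  · obtain ⟨L, hL, hLc⟩ := hder q hq.1.1
    exact ⟨L, hL.mono inter_subset_left, hLc⟩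
  · obtain ⟨ht, hx⟩ := not_or.mp hq.2
    filter_upwards [hhyp.eventually_backward_mem_mixedRect hq.1.1
      (lt_of_le_of_ne hq.1.1.2.1 (Ne.symm ht)) hx, self_mem_nhdsWithin] with ε hεR hε
    exact ⟨hεR, hCback q hq.1 ε hε⟩

theorem HyperbolicOn.abs_outflow_le {MΛ : ℝ} (hhyp : HyperbolicOn n k Λ (MixedRect l T))
    (hMΛ : ∀ p ∈ MixedRect l T, ∀ i : Fin n, |Λ p i| ≤ MΛ) (hMΛl : T * MΛ < l) (hl : 0 ≤ l)
    {i : Fin n} {g : ℝ × ℝ → ℝ} (hg : ContinuousOn g (MixedRect l T)) {b c : ℝ}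
    (hder : ∀ p ∈ MixedRect l T, ∃ L : ℝ × ℝ →L[ℝ] ℝ,
      HasFDerivWithinAt g L (MixedRect l T) p ∧ |L (Λ p i, 1)| ≤ c)
    (hinit : ∀ x ∈ Icc 0 l, |g (x, 0)| ≤ b) {τ : ℝ} (hτ : τ ∈ Icc 0 T) :
    |g (outflowEdge k l i, τ)| ≤ b + c * τ := by
  have hapex : (outflowEdge k l i, τ) ∈ MixedRect l T ∩ backwardCone (outflowEdge k l i) τ MΛ :=
    ⟨⟨outflowEdge_mem_Icc hl k i, hτ⟩, by simp [backwardCone]⟩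
  refine hhyp.abs_le_of_exit_le (isClosed_backwardCone _ _ _)
    (fun p hp ε hε => sub_smul_mem_backwardCone hp.2 (hMΛ p hp.1 i) hε.le) hg hder ?_ hapex
  rintro ⟨x, t⟩ ⟨hpR, hpC⟩ (ht | hx)
  · obtain rfl : t = 0 := ht
    simpa using hinit x hpR.1
  · -- the cone stays at distance `l > T MΛ` from the inflow edge
    exfalso
    have hcone : |x - outflowEdge k l i| ≤ MΛ * (τ - t) := hpC
    obtain rfl : x = inflowEdge k l i := hx
    rw [abs_inflowEdge_sub_outflowEdge hl] at hcone
    nlinarith [(abs_nonneg _).trans (hMΛ _ hpR i), hpR.2.1, hτ.2]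

end MixedProblem

section Stability

variable {n k : ℕ} {l T LF LH MΛ m₁ m₂ m₃ d : ℝ} {Λ : ℝ × ℝ → Fin n → ℝ}
  {F : ℝ × ℝ → (Fin n → ℝ) → Fin n → ℝ} {A : ℝ → Fin n → ℝ} {H : ℝ → (Fin n → ℝ) → Fin n → ℝ}
  {M₁ : ℝ × ℝ → Fin n → ℝ} {M₂ : ℝ → Fin n → ℝ} {M₃ : ℝ → Fin n → ℝ} {W U : ℝ × ℝ → Fin n → ℝ}

theorem sum_abs_sub_le_of_forall {f g : Fin n → ℝ} (h : ∀ j, |f j - g j| ≤ d) :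
    ∑ j, |f j - g j| ≤ n * d := by
  simpa using Finset.sum_le_card_nsmul Finset.univ _ d fun j _ => h j

theorem exists_hasFDerivWithinAt_sub_abs_le (hLF : 0 ≤ LF)
    (hLipF : LipschitzFOn n F (MixedRect l T) LF)
    (hW : DifferentiableOn ℝ W (MixedRect l T)) (hWsol : IsMixedSolution n k l T Λ F A H W)
    {A' : ℝ → Fin n → ℝ} {H' : ℝ → (Fin n → ℝ) → Fin n → ℝ}
    (hU : DifferentiableOn ℝ U (MixedRect l T))
    (hUsol : IsMixedSolution n k l T Λ (fun p y i => F p y i + M₁ p i) A' H' U)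
    (hm₁ : ∀ p ∈ MixedRect l T, ∀ i : Fin n, |M₁ p i| ≤ m₁)
    (hd : ∀ p ∈ MixedRect l T, ∀ i : Fin n, |U p i - W p i| ≤ d)
    {p : ℝ × ℝ} (hp : p ∈ MixedRect l T) (i : Fin n) :
    ∃ L : ℝ × ℝ →L[ℝ] ℝ, HasFDerivWithinAt (fun q => U q i - W q i) L (MixedRect l T) p ∧
      |L (Λ p i, 1)| ≤ n * LF * d + m₁ := by
  obtain ⟨L, hL, hLval⟩ := hUsol.exists_hasFDerivWithinAt_sub hWsol hU hW hp i
  refine ⟨L, hL, ?_⟩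
  rw [hLval, add_sub_right_comm]
  calc |F p (U p) i - F p (W p) i + M₁ p i|
      ≤ |F p (U p) i - F p (W p) i| + |M₁ p i| := abs_add_le _ _
    _ ≤ LF * (n * d) + m₁ := add_le_add ((hLipF p hp i _ _).trans
        (mul_le_mul_of_nonneg_left (sum_abs_sub_le_of_forall (hd p hp)) hLF)) (hm₁ p hp i)
    _ = n * LF * d + m₁ := by ring

theorem abs_sub_inflow_le (hLH : 0 ≤ LH) (hLipH : LipschitzHOn n H T LH)
    (hWsol : IsMixedSolution n k l T Λ F A H W) {F' : ℝ × ℝ → (Fin n → ℝ) → Fin n → ℝ}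
    {A' : ℝ → Fin n → ℝ}
    (hUsol : IsMixedSolution n k l T Λ F' A' (fun t z i => H t z i + M₃ t i) U)
    (hm₃ : ∀ t ∈ Icc 0 T, ∀ i : Fin n, |M₃ t i| ≤ m₃) {w : ℝ}
    (htrace : ∀ t ∈ Icc 0 T, ∀ j : Fin n,
      |U (outflowEdge k l j, t) j - W (outflowEdge k l j, t) j| ≤ w)
    {t : ℝ} (ht : t ∈ Icc 0 T) (i : Fin n) :
    |U (inflowEdge k l i, t) i - W (inflowEdge k l i, t) i| ≤ n * LH * w + m₃ := by
  rw [hUsol.inflow_eq ht, hWsol.inflow_eq ht, add_sub_right_comm]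
  calc |H t (bTrace n k l U t) i - H t (bTrace n k l W t) i + M₃ t i|
      ≤ |H t (bTrace n k l U t) i - H t (bTrace n k l W t) i| + |M₃ t i| := abs_add_le _ _
    _ ≤ LH * (n * w) + m₃ := by
        refine add_le_add ((hLipH t ht i _ _).trans (mul_le_mul_of_nonneg_left ?_ hLH))
          (hm₃ t ht i)
        exact sum_abs_sub_le_of_forall fun j => by simpa only [bTrace_apply] using htrace t ht j
    _ = n * LH * w + m₃ := by ring

theorem abs_sub_le_of_forall_abs_sub_le (hhyp : HyperbolicOn n k Λ (MixedRect l T))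
    (hLF : 0 ≤ LF) (hLH : 0 ≤ LH) (hLipF : LipschitzFOn n F (MixedRect l T) LF)
    (hLipH : LipschitzHOn n H T LH) (hMΛ : ∀ p ∈ MixedRect l T, ∀ i : Fin n, |Λ p i| ≤ MΛ)
    (hMΛl : T * MΛ < l) (hW : ContDiffOn ℝ 1 W (MixedRect l T))
    (hWsol : IsMixedSolution n k l T Λ F A H W) (hU : ContDiffOn ℝ 1 U (MixedRect l T))
    (hUsol : IsMixedSolution n k l T Λ (fun p y i => F p y i + M₁ p i)
      (fun x i => A x i + M₂ x i) (fun t z i => H t z i + M₃ t i) U)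
    (hm₁ : ∀ p ∈ MixedRect l T, ∀ i : Fin n, |M₁ p i| ≤ m₁)
    (hm₂ : ∀ x ∈ Icc 0 l, ∀ i : Fin n, |M₂ x i| ≤ m₂)
    (hm₃ : ∀ t ∈ Icc 0 T, ∀ i : Fin n, |M₃ t i| ≤ m₃)
    (hd : ∀ p ∈ MixedRect l T, ∀ i : Fin n, |U p i - W p i| ≤ d)
    {p : ℝ × ℝ} (hp : p ∈ MixedRect l T) (i : Fin n) :
    |U p i - W p i| ≤ (m₂ + (n * LF * d + m₁) * T) * (1 + n * LH) + m₃ := by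
  set c := n * LF * d + m₁
  have hc : 0 ≤ c := by
    have hd₀ : 0 ≤ d := (abs_nonneg _).trans (hd p hp i)
    have hm₁₀ : 0 ≤ m₁ := (abs_nonneg _).trans (hm₁ p hp i)
    positivity
  have hm₂₀ : 0 ≤ m₂ := (abs_nonneg _).trans (hm₂ p.1 hp.1 i)
  have hm₃₀ : 0 ≤ m₃ := (abs_nonneg _).trans (hm₃ p.2 hp.2 i)
  have hg : ∀ j : Fin n, ContinuousOn (fun q => U q j - W q j) (MixedRect l T) := fun j =>
    ((continuous_apply j).comp_continuousOn hU.continuousOn).sub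
      ((continuous_apply j).comp_continuousOn hW.continuousOn)
  have hder : ∀ q ∈ MixedRect l T, ∀ j : Fin n, ∃ L : ℝ × ℝ →L[ℝ] ℝ,
      HasFDerivWithinAt (fun q => U q j - W q j) L (MixedRect l T) q ∧ |L (Λ q j, 1)| ≤ c :=
    fun q hq => exists_hasFDerivWithinAt_sub_abs_le hLF hLipF (hW.differentiableOn one_ne_zero)
      hWsol (hU.differentiableOn one_ne_zero) hUsol hm₁ hd hq
  have hinit : ∀ j : Fin n, ∀ x ∈ Icc 0 l, |U (x, 0) j - W (x, 0) j| ≤ m₂ := by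
    intro j x hx
    rw [hUsol.2.1 x hx j, hWsol.2.1 x hx j, add_sub_cancel_left]
    exact hm₂ x hx j
  have htrace : ∀ t ∈ Icc 0 T, ∀ j : Fin n,
      |U (outflowEdge k l j, t) j - W (outflowEdge k l j, t) j| ≤ m₂ + c * T := fun t ht j =>
    (hhyp.abs_outflow_le hMΛ hMΛl (hp.1.1.trans hp.1.2) (hg j) (hder · · j) (hinit j) ht).trans
      (by gcongr; exact ht.2)
  have hβ : 0 ≤ n * LH * (m₂ + c * T) + m₃ := by
    have hT : 0 ≤ T := hp.2.1.trans hp.2.2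
    positivity
  have hbound := hhyp.abs_le_of_exit_le isClosed_univ (fun _ _ _ _ => mem_univ _) (hg i)
    (hder · · i) (b := m₂ + (n * LH * (m₂ + c * T) + m₃)) ?_ ⟨hp, mem_univ _⟩
  · nlinarith [hp.2.2]
  rintro ⟨x, t⟩ ⟨hq, -⟩ (ht | hx)
  · obtain rfl : t = 0 := ht
    nlinarith [hinit i x hq.1]
  · obtain rfl : x = inflowEdge k l i := hx
    nlinarith [abs_sub_inflow_le hLH hLipH hWsol hUsol hm₃ htrace hq.2 i, hq.2.1]

end Stability

theorem statement5_general
    (n k : ℕ) (l t₀ : ℝ)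
    (Λ : ℝ × ℝ → Fin n → ℝ) (F : ℝ × ℝ → (Fin n → ℝ) → Fin n → ℝ)
    (A : ℝ → Fin n → ℝ) (H : ℝ → (Fin n → ℝ) → Fin n → ℝ)
    (hhyp : HyperbolicOn n k Λ (MixedRect l t₀))
    (LF LH : ℝ) (hLF : 0 ≤ LF) (hLH : 0 ≤ LH)
    (hLipF : LipschitzFOn n F (MixedRect l t₀) LF)
    (hLipH : LipschitzHOn n H t₀ LH)
    (hq₀ : (n : ℝ) * LF * (1 + n * LH) * t₀ < 1)
    (MΛ : ℝ) (hMΛ : ∀ p ∈ MixedRect l t₀, ∀ i : Fin n, |Λ p i| ≤ MΛ)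
    (hMΛl : t₀ * MΛ < l)
    (M₁ : ℝ × ℝ → Fin n → ℝ) (M₂ : ℝ → Fin n → ℝ) (M₃ : ℝ → Fin n → ℝ)
    (W U : ℝ × ℝ → Fin n → ℝ)
    (hW : ContDiffOn ℝ 1 W (MixedRect l t₀))
    (hWsol : IsMixedSolution n k l t₀ Λ F A H W)
    (hU : ContDiffOn ℝ 1 U (MixedRect l t₀))
    (hUsol : IsMixedSolution n k l t₀ Λ
      (fun p y i => F p y i + M₁ p i)
      (fun x i => A x i + M₂ x i)
      (fun t z i => H t z i + M₃ t i) U) :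
    ∀ m₁ m₂ m₃ : ℝ,
      (∀ p ∈ MixedRect l t₀, ∀ i : Fin n, |M₁ p i| ≤ m₁) →
      (∀ x ∈ Set.Icc (0 : ℝ) l, ∀ i : Fin n, |M₂ x i| ≤ m₂) →
      (∀ t ∈ Set.Icc (0 : ℝ) t₀, ∀ i : Fin n, |M₃ t i| ≤ m₃) →
      ∀ p ∈ MixedRect l t₀, ∀ i : Fin n,
        |U p i - W p i| ≤ (1 / (1 - (n : ℝ) * LF * (1 + n * LH) * t₀)) *
          ((m₂ + t₀ * m₁) * (1 + n * LH) + m₃) := by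
  intro m₁ m₂ m₃ hm₁ hm₂ hm₃ p hp i
  have : Nonempty (Fin n) := ⟨i⟩
  obtain ⟨p₀, hp₀, hmax⟩ := (isCompact_mixedRect l t₀).exists_isMaxOn ⟨p, hp⟩
    (hU.continuousOn.sub hW.continuousOn).norm
  set d := ‖U p₀ - W p₀‖
  have hd : ∀ q ∈ MixedRect l t₀, ∀ j : Fin n, |U q j - W q j| ≤ d := fun q hq j =>
    (norm_le_pi_norm (U q - W q) j).trans (hmax hq)
  have hd_le : d ≤ (m₂ + (n * LF * d + m₁) * t₀) * (1 + n * LH) + m₃ :=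
    (pi_norm_le_iff_of_nonempty _).mpr fun j => abs_sub_le_of_forall_abs_sub_le hhyp hLF hLH
      hLipF hLipH hMΛ hMΛl hW hWsol hU hUsol hm₁ hm₂ hm₃ hd hp₀ j
  calc |U p i - W p i| ≤ d := hd p hp i
    _ ≤ _ := by
      rw [one_div_mul_eq_div, le_div_iff₀ (by linarith)]
      linarith

/-- Local stability of the semilinear hyperbolic mixed problem under
perturbation of the data: with continuous data, hyperbolicity and the Lipschitz
hypotheses, `q₀ = n L_F (1 + n L_H)`, `q₀ t₀ < 1`, `t₀ · max_i sup |Λ_i| < l`; if `W`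
is a `C¹` solution of the mixed problem and `U` a `C¹` solution of the problem
perturbed by continuous `M¹, M², M³` (in the equation, the initial condition, and the
boundary conditions respectively), then for any upper bounds `m₁, m₂, m₃` of the sup
norms of `M¹, M², M³`,
`max_i sup |U_i − W_i| ≤ (1/(1 − q₀t₀)) ((m₂ + t₀ m₁)(1 + n L_H) + m₃)`. -/
theorem statement5
    (n k : ℕ) (hn : 1 ≤ n) (hk : 1 ≤ k) (hkn : k ≤ n)
    (l t₀ : ℝ) (hl : 0 < l) (ht₀ : 0 < t₀)
    (Λ : ℝ × ℝ → Fin n → ℝ) (F : ℝ × ℝ → (Fin n → ℝ) → Fin n → ℝ)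
    (A : ℝ → Fin n → ℝ) (H : ℝ → (Fin n → ℝ) → Fin n → ℝ)
    (hΛ : ContinuousOn Λ (MixedRect l t₀))
    (hF : ContinuousOn (fun q : (ℝ × ℝ) × (Fin n → ℝ) => F q.1 q.2)
      (MixedRect l t₀ ×ˢ (Set.univ : Set (Fin n → ℝ))))
    (hH : ContinuousOn (fun q : ℝ × (Fin n → ℝ) => H q.1 q.2)
      (Set.Icc (0 : ℝ) t₀ ×ˢ (Set.univ : Set (Fin n → ℝ))))
    (hA : ContinuousOn A (Set.Icc 0 l))
    (hhyp : HyperbolicOn n k Λ (MixedRect l t₀))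
    (LF LH : ℝ) (hLF : 0 ≤ LF) (hLH : 0 ≤ LH)
    (hLipF : LipschitzFOn n F (MixedRect l t₀) LF)
    (hLipH : LipschitzHOn n H t₀ LH)
    (hq₀ : (n : ℝ) * LF * (1 + n * LH) * t₀ < 1)
    (MΛ : ℝ) (hMΛ : ∀ p ∈ MixedRect l t₀, ∀ i : Fin n, |Λ p i| ≤ MΛ)
    (hMΛl : t₀ * MΛ < l)
    (M₁ : ℝ × ℝ → Fin n → ℝ) (M₂ : ℝ → Fin n → ℝ) (M₃ : ℝ → Fin n → ℝ)
    (hM₁ : ContinuousOn M₁ (MixedRect l t₀))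
    (hM₂ : ContinuousOn M₂ (Set.Icc 0 l))
    (hM₃ : ContinuousOn M₃ (Set.Icc 0 t₀))
    (W U : ℝ × ℝ → Fin n → ℝ)
    (hW : ContDiffOn ℝ 1 W (MixedRect l t₀))
    (hWsol : IsMixedSolution n k l t₀ Λ F A H W)
    (hU : ContDiffOn ℝ 1 U (MixedRect l t₀))
    (hUsol : IsMixedSolution n k l t₀ Λ
      (fun p y i => F p y i + M₁ p i)
      (fun x i => A x i + M₂ x i)
      (fun t z i => H t z i + M₃ t i) U) :
    ∀ m₁ m₂ m₃ : ℝ,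
      (∀ p ∈ MixedRect l t₀, ∀ i : Fin n, |M₁ p i| ≤ m₁) →
      (∀ x ∈ Set.Icc (0 : ℝ) l, ∀ i : Fin n, |M₂ x i| ≤ m₂) →
      (∀ t ∈ Set.Icc (0 : ℝ) t₀, ∀ i : Fin n, |M₃ t i| ≤ m₃) →
      ∀ p ∈ MixedRect l t₀, ∀ i : Fin n,
        |U p i - W p i| ≤ (1 / (1 - (n : ℝ) * LF * (1 + n * LH) * t₀)) *
          ((m₂ + t₀ * m₁) * (1 + n * LH) + m₃) :=
  statement5_general n k l t₀ Λ F A H hhyp LF LH hLF hLH hLipF hLipH hq₀ MΛ hMΛ hMΛl M₁ M₂ M₃ W U hW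
    hWsol hU hUsol
end
end

section
/- A non-Lipschitz nonlinearity with log-log gradient bound: Let a, b, c, d ∈ ℝ with a > 0 and c ≥ 4, and define f : ℝ → ℝ by f(u) = (a² + b²u²)^{1/2} · log(log((c² + d²u²)^{1/2})). Then (1) f is differentiable and there exists a constant C > 0 such that |f′(u)| ≤ C · log(log(c² + d²u²)) for all u ∈ ℝ; and (2) if b ≠ 0 and d ≠ 0, then f′ is unbounded on ℝ; in particular f is not globally Lipschitz. -/
/-!
Both factors of `f` are smooth since `a > 0` and `log √(c² + d²u²) > 1`. In the product rule the
second term stays bounded (and is nonnegative for `u ≥ 0`), while the first is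
`(b²u / √(a² + b²u²)) · log log √(c² + d²u²)`, whose coefficient is at most `|b|` in absolute value
and at least `|b| / 2` once `|b| u ≥ a`. So `|f′|` is dominated by a multiple of
`log log (c² + d²u²) ≥ log log 16 > 0`, and for `b, d ≠ 0` it tends to infinity, which rules out a
global Lipschitz constant since a Lipschitz constant bounds `|f′|`.
-/

open Real Filter

noncomputable section

section SqrtQuadratic

variable {a b p k u : ℝ}

theorem hasDerivAt_sqrt_add_mul_sq (h : 0 < p + k * u ^ 2) :
    HasDerivAt (fun x => √(p + k * x ^ 2)) (k * u / √(p + k * u ^ 2)) u := by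
  have hq : HasDerivAt (fun x => p + k * x ^ 2) (2 * (k * u)) u :=
    (((hasDerivAt_pow 2 u).const_mul k).const_add p).congr_deriv (by norm_num; ring)
  convert hq.sqrt h.ne' using 1
  field_simp

theorem abs_sq_mul_le_abs_mul_sqrt (a b u : ℝ) : |b ^ 2 * u| ≤ |b| * √(a ^ 2 + b ^ 2 * u ^ 2) := by
  have h : |b * u| ≤ √(a ^ 2 + b ^ 2 * u ^ 2) := abs_le_sqrt (by nlinarith [sq_nonneg a])
  calc |b ^ 2 * u| = |b| * |b * u| := by rw [← abs_mul, ← mul_assoc, ← sq]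
    _ ≤ |b| * √(a ^ 2 + b ^ 2 * u ^ 2) := by gcongr

theorem sqrt_sq_add_sq_mul_sq_le (ha : 0 ≤ a) (b u : ℝ) :
    √(a ^ 2 + b ^ 2 * u ^ 2) ≤ a + |b| * |u| := by
  rw [sqrt_le_left (by positivity)]
  nlinarith [sq_abs b, sq_abs u, mul_nonneg ha (mul_nonneg (abs_nonneg b) (abs_nonneg u))]

theorem abs_div_two_le_sq_mul_div_sqrt (ha : 0 < a) (hu₀ : 0 ≤ u) (hu : a ≤ |b| * u) :
    |b| / 2 ≤ b ^ 2 * u / √(a ^ 2 + b ^ 2 * u ^ 2) := by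
  have hsqrt : √(a ^ 2 + b ^ 2 * u ^ 2) ≤ 2 * |b| * u := by
    have := sqrt_sq_add_sq_mul_sq_le ha.le b u
    rw [abs_of_nonneg hu₀] at this
    linarith
  rw [le_div_iff₀ (sqrt_pos.2 (by positivity))]
  calc |b| / 2 * √(a ^ 2 + b ^ 2 * u ^ 2) ≤ |b| / 2 * (2 * |b| * u) := by gcongr
    _ = b ^ 2 * u := by rw [← sq_abs b]; ring

end SqrtQuadratic

section LogLogSqrt

variable {c : ℝ}

theorem sixteen_le_sq_add_sq_mul_sq (hc : 4 ≤ c) (d u : ℝ) : 16 ≤ c ^ 2 + d ^ 2 * u ^ 2 := by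
  nlinarith [sq_nonneg (d * u)]

theorem one_lt_log_sqrt_sq_add_sq_mul_sq (hc : 4 ≤ c) (d u : ℝ) :
    1 < log √(c ^ 2 + d ^ 2 * u ^ 2) := by
  have hs := sixteen_le_sq_add_sq_mul_sq hc d u
  rw [lt_log_iff_exp_lt (sqrt_pos.2 (by linarith))]
  calc exp 1 < 4 := by linarith [exp_one_lt_d9]
    _ ≤ √(c ^ 2 + d ^ 2 * u ^ 2) := by rw [le_sqrt (by norm_num) (by linarith)]; linarith

theorem hasDerivAt_log_log_sqrt (hc : 4 ≤ c) (d u : ℝ) :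
    HasDerivAt (fun x => log (log √(c ^ 2 + d ^ 2 * x ^ 2)))
      (d ^ 2 * u / ((c ^ 2 + d ^ 2 * u ^ 2) * log √(c ^ 2 + d ^ 2 * u ^ 2))) u := by
  have hs : 0 < c ^ 2 + d ^ 2 * u ^ 2 := by linarith [sixteen_le_sq_add_sq_mul_sq hc d u]
  have hℓ := one_lt_log_sqrt_sq_add_sq_mul_sq hc d u
  convert ((hasDerivAt_sqrt_add_mul_sq hs).log (sqrt_pos.2 hs).ne').log (by linarith) using 1
  field_simp
  rw [sq_sqrt hs.le]

theorem log_log_sqrt_le_log_log (hc : 4 ≤ c) (d u : ℝ) :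
    log (log √(c ^ 2 + d ^ 2 * u ^ 2)) ≤ log (log (c ^ 2 + d ^ 2 * u ^ 2)) := by
  have hs := sixteen_le_sq_add_sq_mul_sq hc d u
  have hℓ := one_lt_log_sqrt_sq_add_sq_mul_sq hc d u
  refine log_le_log (by linarith) (log_le_log (sqrt_pos.2 (by linarith)) ?_)
  exact sqrt_le_self_iff.2 (.inr (by linarith))

theorem log_log_sixteen_pos : 0 < log (log 16) :=
  log_pos <| (lt_log_iff_exp_lt (by norm_num)).2 (by linarith [exp_one_lt_d9])

theorem log_log_sixteen_le (hc : 4 ≤ c) (d u : ℝ) :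
    log (log 16) ≤ log (log (c ^ 2 + d ^ 2 * u ^ 2)) :=
  log_le_log (log_pos (by norm_num)) (log_le_log (by norm_num) (sixteen_le_sq_add_sq_mul_sq hc d u))

theorem tendsto_log_log_sqrt_atTop {d : ℝ} (hd : d ≠ 0) :
    Tendsto (fun u => log (log √(c ^ 2 + d ^ 2 * u ^ 2))) atTop atTop :=
  tendsto_log_atTop.comp <| tendsto_log_atTop.comp <| tendsto_sqrt_atTop.comp <|
    tendsto_atTop_add_const_left _ _ <|
      (tendsto_pow_atTop two_ne_zero).const_mul_atTop (by positivity)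

end LogLogSqrt

section SqrtLogLog

def sqrtLogLog (a b c d u : ℝ) : ℝ :=
  √(a ^ 2 + b ^ 2 * u ^ 2) * log (log √(c ^ 2 + d ^ 2 * u ^ 2))

def sqrtLogLogDeriv (a b c d u : ℝ) : ℝ :=
  b ^ 2 * u / √(a ^ 2 + b ^ 2 * u ^ 2) * log (log √(c ^ 2 + d ^ 2 * u ^ 2)) +
    √(a ^ 2 + b ^ 2 * u ^ 2) *
      (d ^ 2 * u / ((c ^ 2 + d ^ 2 * u ^ 2) * log √(c ^ 2 + d ^ 2 * u ^ 2)))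

variable {a b c d : ℝ}

theorem hasDerivAt_sqrtLogLog (ha : 0 < a) (hc : 4 ≤ c) (u : ℝ) :
    HasDerivAt (sqrtLogLog a b c d) (sqrtLogLogDeriv a b c d u) u :=
  (hasDerivAt_sqrt_add_mul_sq (by positivity)).mul (hasDerivAt_log_log_sqrt hc d u)

theorem sqrt_mul_abs_sq_mul_le (ha : 0 ≤ a) (hc : 4 ≤ c) (b d u : ℝ) :
    √(a ^ 2 + b ^ 2 * u ^ 2) * |d ^ 2 * u| ≤ (a * |d| + |b|) * (c ^ 2 + d ^ 2 * u ^ 2) := by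
  have hdu : |d| * |u| ≤ c ^ 2 + d ^ 2 * u ^ 2 := by
    nlinarith [sq_nonneg (|d| * |u| - 1), sq_abs d, sq_abs u]
  have hd : |d ^ 2 * u| = |d| * (|d| * |u|) := by rw [abs_mul, abs_pow, sq, mul_assoc]
  calc √(a ^ 2 + b ^ 2 * u ^ 2) * |d ^ 2 * u| ≤ (a + |b| * |u|) * (|d| * (|d| * |u|)) := by
        rw [hd]
        gcongr
        exact sqrt_sq_add_sq_mul_sq_le ha b u
    _ = a * |d| * (|d| * |u|) + |b| * (d ^ 2 * u ^ 2) := by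
        rw [← sq_abs d, ← sq_abs u]; ring
    _ ≤ (a * |d| + |b|) * (c ^ 2 + d ^ 2 * u ^ 2) := by
        have : d ^ 2 * u ^ 2 ≤ c ^ 2 + d ^ 2 * u ^ 2 := by nlinarith
        nlinarith [mul_le_mul_of_nonneg_left hdu (by positivity : 0 ≤ a * |d|),
          mul_le_mul_of_nonneg_left this (abs_nonneg b)]

theorem abs_sqrtLogLogDeriv_le (ha : 0 < a) (hc : 4 ≤ c) (u : ℝ) :
    |sqrtLogLogDeriv a b c d u| ≤ |b| * log (log (c ^ 2 + d ^ 2 * u ^ 2)) + (a * |d| + |b|) := by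
  set q := a ^ 2 + b ^ 2 * u ^ 2
  set s := c ^ 2 + d ^ 2 * u ^ 2
  have hq : 0 < √q := sqrt_pos.2 (by positivity)
  have hs : 0 < s := by linarith [sixteen_le_sq_add_sq_mul_sq hc d u]
  have hℓ : 1 < log √s := one_lt_log_sqrt_sq_add_sq_mul_sq hc d u
  have hfirst : |b ^ 2 * u / √q * log (log √s)| ≤ |b| * log (log s) := by
    rw [abs_mul, abs_div, abs_of_pos hq, abs_of_nonneg (log_nonneg hℓ.le)]
    calc |b ^ 2 * u| / √q * log (log √s) ≤ |b| * log (log √s) :=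
          mul_le_mul_of_nonneg_right
            (div_le_of_le_mul₀ hq.le (abs_nonneg b) (abs_sq_mul_le_abs_mul_sqrt a b u))
            (log_nonneg hℓ.le)
      _ ≤ |b| * log (log s) :=
          mul_le_mul_of_nonneg_left (log_log_sqrt_le_log_log hc d u) (abs_nonneg b)
  have hsecond : |√q * (d ^ 2 * u / (s * log √s))| ≤ a * |d| + |b| := by
    have hsℓ : 0 < s * log √s := mul_pos hs (by linarith)
    rw [← mul_div_assoc, abs_div, abs_mul, abs_of_pos hq, abs_of_pos hsℓ, div_le_iff₀ hsℓ]
    calc √q * |d ^ 2 * u| ≤ (a * |d| + |b|) * s := sqrt_mul_abs_sq_mul_le ha.le hc b d u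
      _ ≤ (a * |d| + |b|) * (s * log √s) := by
          gcongr; exact le_mul_of_one_le_right hs.le hℓ.le
  exact (abs_add_le _ _).trans (add_le_add hfirst hsecond)

theorem exists_abs_sqrtLogLogDeriv_le (ha : 0 < a) (hc : 4 ≤ c) :
    ∃ C > (0 : ℝ), ∀ u, |sqrtLogLogDeriv a b c d u| ≤ C * log (log (c ^ 2 + d ^ 2 * u ^ 2)) := by
  set K := a * |d| + |b| + 1
  have hm := log_log_sixteen_pos
  refine ⟨|b| + K / log (log 16), by positivity, fun u => ?_⟩
  have hL := log_log_sixteen_le hc d u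
  have hK : K ≤ K / log (log 16) * log (log (c ^ 2 + d ^ 2 * u ^ 2)) := by
    rw [div_mul_eq_mul_div, le_div_iff₀ hm]
    gcongr
  calc |sqrtLogLogDeriv a b c d u|
      ≤ |b| * log (log (c ^ 2 + d ^ 2 * u ^ 2)) + (a * |d| + |b|) := abs_sqrtLogLogDeriv_le ha hc u
    _ ≤ (|b| + K / log (log 16)) * log (log (c ^ 2 + d ^ 2 * u ^ 2)) := by linarith

theorem abs_div_two_mul_le_sqrtLogLogDeriv (ha : 0 < a) (hc : 4 ≤ c) (hb : b ≠ 0)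
    {u : ℝ} (hu : a / |b| ≤ u) :
    |b| / 2 * log (log √(c ^ 2 + d ^ 2 * u ^ 2)) ≤ sqrtLogLogDeriv a b c d u := by
  have hb' : 0 < |b| := abs_pos.2 hb
  have hu₀ : 0 ≤ u := (div_pos ha hb').le.trans hu
  have hℓ := one_lt_log_sqrt_sq_add_sq_mul_sq hc d u
  have hfirst := mul_le_mul_of_nonneg_right
    (abs_div_two_le_sq_mul_div_sqrt ha hu₀ ((div_le_iff₀' hb').1 hu)) (log_nonneg hℓ.le)
  have hsecond : 0 ≤ √(a ^ 2 + b ^ 2 * u ^ 2) *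
      (d ^ 2 * u / ((c ^ 2 + d ^ 2 * u ^ 2) * log √(c ^ 2 + d ^ 2 * u ^ 2))) :=
    mul_nonneg (sqrt_nonneg _) (div_nonneg (by positivity) (mul_nonneg (by positivity) (by linarith)))
  rw [sqrtLogLogDeriv]
  linarith

theorem tendsto_sqrtLogLogDeriv_atTop (ha : 0 < a) (hc : 4 ≤ c) (hb : b ≠ 0) (hd : d ≠ 0) :
    Tendsto (sqrtLogLogDeriv a b c d) atTop atTop := by
  refine tendsto_atTop_mono' _ ?_
    ((tendsto_log_log_sqrt_atTop (c := c) hd).const_mul_atTop (by positivity : 0 < |b| / 2))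
  filter_upwards [eventually_ge_atTop (a / |b|)] with u hu
  exact abs_div_two_mul_le_sqrtLogLogDeriv ha hc hb hu

end SqrtLogLog

/-- A non-Lipschitz nonlinearity with log-log gradient bound: for
`a > 0`, `c ≥ 4` and `f(u) = (a² + b²u²)^{1/2} log(log((c² + d²u²)^{1/2}))`:
(1) `f` is differentiable and `|f′(u)| ≤ C log(log(c² + d²u²))` for some constant
`C > 0` and all `u`; (2) if `b ≠ 0` and `d ≠ 0` then `f′` is unbounded on `ℝ`, and in
particular `f` is not globally Lipschitz. -/
theorem statement12 (a b c d : ℝ) (ha : 0 < a) (hc : 4 ≤ c)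
    (f : ℝ → ℝ)
    (hf : ∀ u : ℝ, f u = Real.sqrt (a ^ 2 + b ^ 2 * u ^ 2) *
      Real.log (Real.log (Real.sqrt (c ^ 2 + d ^ 2 * u ^ 2)))) :
    Differentiable ℝ f ∧
    (∃ C > (0 : ℝ), ∀ u : ℝ,
      |deriv f u| ≤ C * Real.log (Real.log (c ^ 2 + d ^ 2 * u ^ 2))) ∧
    (b ≠ 0 → d ≠ 0 →
      (¬ ∃ M : ℝ, ∀ u : ℝ, |deriv f u| ≤ M) ∧
      ¬ ∃ L : ℝ, 0 ≤ L ∧ ∀ u v : ℝ, |f u - f v| ≤ L * |u - v|) := by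
  obtain rfl : f = sqrtLogLog a b c d := funext hf
  have hderiv : deriv (sqrtLogLog a b c d) = sqrtLogLogDeriv a b c d :=
    funext fun u => (hasDerivAt_sqrtLogLog ha hc u).deriv
  refine ⟨fun u => (hasDerivAt_sqrtLogLog ha hc u).differentiableAt,
    hderiv ▸ exists_abs_sqrtLogLogDeriv_le ha hc, fun hb hd => ?_⟩
  have hunbounded : ¬ ∃ M : ℝ, ∀ u, |deriv (sqrtLogLog a b c d) u| ≤ M := by
    rintro ⟨M, hM⟩
    obtain ⟨u, hu⟩ := ((tendsto_sqrtLogLogDeriv_atTop ha hc hb hd).eventually_gt_atTop M).exists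
    exact (hu.trans_le (le_abs_self _)).not_ge (hderiv ▸ hM u)
  refine ⟨hunbounded, fun ⟨L, hL, hlip⟩ => hunbounded ⟨L, fun u => ?_⟩⟩
  simpa only [norm_eq_abs] using norm_deriv_le_of_lip' (f := sqrtLogLog a b c d) hL
    (.of_forall fun v => by simpa only [norm_eq_abs] using hlip v u)

end
end
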